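/- Assume O_X is nonempty and that for every continuous f : B_X → ℝ one has PB_{−f} = −PB_f on X. Then for every continuous f : B_X → ℝ the envelope PB_f is real-valued and continuous on X, both PB_f and −PB_f belong to SH(J) (i.e. PB_f is J-harmonic), and PB_f = f on B_X; in particular X is a Poisson set for J, meaning every continuous function on B_X extends to a J-harmonic function on X. (Implication (3) ⇒ (1) of the paper's theorem on the Dirichlet problem for m-harmonic functions.) -/
import Mathlib


open MeasureTheory Topology Metric Set ENNReal

noncomputable instance (n : ℕ) : MeasurableSpace (EuclideanSpace ℂ (Fin n)) := borel _
instance (n : ℕ) : BorelSpace (EuclideanSpace ℂ (Fin n)) := ⟨rfl⟩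

/-- The positive part of an extended real number, as an element of `ℝ≥0∞`. -/
noncomputable def EReal.toENNReal' (x : EReal) : ℝ≥0∞ :=
  if x = ⊤ then ⊤ else ENNReal.ofReal x.toReal

/-- The integral of an `EReal`-valued function: the integral of its positive part minus the
integral of its negative part (computed in `EReal`). -/
noncomputable def eint {α : Type*} [MeasurableSpace α] (μ : Measure α) (u : α → EReal) : EReal :=
  ((∫⁻ x, (u x).toENNReal' ∂μ : ℝ≥0∞) : EReal) - ((∫⁻ x, (-u x).toENNReal' ∂μ : ℝ≥0∞) : EReal)

/-- The (closed) support of a measure: points all of whose open neighbourhoods have positive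
measure. -/
def msupp {α : Type*} [TopologicalSpace α] [MeasurableSpace α] (μ : Measure α) : Set α :=
  {x | ∀ U : Set α, IsOpen U → x ∈ U → 0 < μ U}

/-- The class `SH(J)`: upper semicontinuous functions with values in `[-∞, ∞)` satisfying the
sub-mean value inequality with respect to every measure in every `J z`. -/
def IsSH {α : Type*} [TopologicalSpace α] [MeasurableSpace α]
    (J : α → Set (Measure α)) (u : α → EReal) : Prop :=
  UpperSemicontinuous u ∧ (∀ z, u z ≠ ⊤) ∧ ∀ z, ∀ μ ∈ J z, u z ≤ eint μ u

/-- Continuous real-valued members of `SH(J)`. -/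
def IsSHR {α : Type*} [TopologicalSpace α] [MeasurableSpace α]
    (J : α → Set (Measure α)) (u : α → ℝ) : Prop :=
  Continuous u ∧ IsSH J (fun x => (u x : EReal))

/-- The Choquet boundary: points whose only Jensen measure is the Dirac measure. -/
def choquet {α : Type*} [TopologicalSpace α] [MeasurableSpace α]
    (J : α → Set (Measure α)) : Set α := {z | J z = {Measure.dirac z}}

/-- `z` is a peak point: there is `u ∈ SH(J)` with `u z = 0` and `u < 0` elsewhere. -/
def IsPeakPt {α : Type*} [TopologicalSpace α] [MeasurableSpace α]
    (J : α → Set (Measure α)) (z : α) : Prop :=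
  ∃ u : α → EReal, IsSH J u ∧ u z = 0 ∧ ∀ w, w ≠ z → u w < 0

/-- The harmonic measure `ω(z, E, X)`. -/
noncomputable def hm {α : Type*} [TopologicalSpace α] [MeasurableSpace α]
    (J : α → Set (Measure α)) (z : α) (E : Set α) : ℝ≥0∞ :=
  ⨅ (V : Set α) (_ : IsOpen V) (_ : E ⊆ V), ⨆ μ ∈ J z, μ V

/-- The Perron–Bremermann envelope of `f` relative to the Šilov boundary
`closure (choquet J)`. -/
noncomputable def PB {α : Type*} [TopologicalSpace α] [MeasurableSpace α]
    (J : α → Set (Measure α)) (f : α → ℝ) (z : α) : EReal :=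
  sSup {r : EReal | ∃ v : α → ℝ, IsSHR J v ∧ (∀ x ∈ closure (choquet J), v x ≤ f x) ∧
    (v z : EReal) = r}

lemma toENNReal'_mono {x y : EReal} (h : x ≤ y) : x.toENNReal' ≤ y.toENNReal' := by
  unfold EReal.toENNReal'
  rcases eq_or_ne y ⊤ with hy | hy
  · simp [hy]
  · have hx : x ≠ ⊤ := fun hx => hy (top_le_iff.mp (hx ▸ h))
    simp only [hx, hy, if_false]
    rcases eq_or_ne x ⊥ with hb | hb
    · simp [hb]
    · exact ENNReal.ofReal_le_ofReal (EReal.toReal_le_toReal h hb hy)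

lemma eint_mono {α : Type*} [MeasurableSpace α] (μ : Measure α) {u w : α → EReal}
    (h : ∀ x, u x ≤ w x) : eint μ u ≤ eint μ w := by
  unfold eint
  refine EReal.sub_le_sub ?_ ?_
  · exact EReal.coe_ennreal_le_coe_ennreal_iff.2
      (lintegral_mono fun x => toENNReal'_mono (h x))
  · exact EReal.coe_ennreal_le_coe_ennreal_iff.2
      (lintegral_mono fun x => toENNReal'_mono (EReal.neg_le_neg_iff.2 (h x)))

lemma toENNReal'_coe (r : ℝ) : (r : EReal).toENNReal' = ENNReal.ofReal r := by
  unfold EReal.toENNReal'; simp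

lemma eint_const {α : Type*} [MeasurableSpace α] (μ : Measure α) [IsProbabilityMeasure μ]
    (c : ℝ) : eint μ (fun _ => (c : EReal)) = (c : EReal) := by
  unfold eint
  have hneg : (-(c : EReal)).toENNReal' = ENNReal.ofReal (-c) := by
    rw [show -(c : EReal) = ((-c : ℝ) : EReal) by norm_cast, toENNReal'_coe]
  simp only [lintegral_const, measure_univ, mul_one, hneg, toENNReal'_coe,
    EReal.coe_ennreal_ofReal, ← EReal.coe_sub]
  norm_cast
  rcases le_total c 0 with h | h
  · simp [max_eq_right h, max_eq_left (neg_nonneg.2 h)]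
  · simp [max_eq_left h, max_eq_right (neg_nonpos.2 h)]

theorem poisson_of_PB_antisymm {n : ℕ} (X : Set (EuclideanSpace ℂ (Fin n)))
    (hXc : IsCompact X) (hXne : X.Nonempty)
    (J : ∀ _ : ↑X, Set (Measure ↑X))
    (hprob : ∀ z : ↑X, ∀ μ ∈ J z, IsProbabilityMeasure μ)
    (hdirac : ∀ z : ↑X, Measure.dirac z ∈ J z)
    (hO : (choquet J).Nonempty)
    (hsym : ∀ f : ↑X → ℝ, ContinuousOn f (closure (choquet J)) →
      ∀ z : ↑X, PB J (fun x => -f x) z = -(PB J f z)) :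
    ∀ f : ↑X → ℝ, ContinuousOn f (closure (choquet J)) →
      ∃ F : ↑X → ℝ, (∀ z : ↑X, (F z : EReal) = PB J f z) ∧
        IsSHR J F ∧ IsSHR J (fun x => -F x) ∧ EqOn F f (closure (choquet J)) := by
  intro f hf
  haveI : CompactSpace ↥X := isCompact_iff_compactSpace.mp hXc
  set B := closure (choquet J) with hBdef
  have hBc : IsCompact B := isClosed_closure.isCompact
  obtain ⟨C, hC⟩ := hBc.exists_bound_of_continuousOn hf
  -- constants are in SHR
  have hconst : ∀ c : ℝ, IsSHR J (fun _ => c) := by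
    intro c
    refine ⟨continuous_const, ?_, fun z => EReal.coe_ne_top c, fun z μ hμ => ?_⟩
    · exact (continuous_coe_real_ereal.comp continuous_const).upperSemicontinuous
    · haveI := hprob z μ hμ
      exact le_of_eq (eint_const μ c).symm
  -- any admissible v is below the envelope
  have le_PB : ∀ (g v : ↑X → ℝ), IsSHR J v → (∀ x ∈ B, v x ≤ g x) →
      ∀ z : ↑X, (v z : EReal) ≤ PB J g z := by
    intro g v hv hvg z
    exact le_sSup ⟨v, hv, hvg, rfl⟩
  -- envelope satisfies the sub-mean inequality
  have PB_le_eint : ∀ (g : ↑X → ℝ) (z : ↑X), ∀ μ ∈ J z, PB J g z ≤ eint μ (PB J g) := by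
    intro g z μ hμ
    refine sSup_le ?_
    rintro r ⟨v, hv, hvg, rfl⟩
    calc (v z : EReal) ≤ eint μ (fun x => (v x : EReal)) := hv.2.2.2 z μ hμ
      _ ≤ eint μ (PB J g) := eint_mono μ fun x => le_PB g v hv hvg x
  -- the envelope is bounded below by the constant -C
  have hlow : ∀ z : ↑X, ((-C : ℝ) : EReal) ≤ PB J f z := by
    intro z
    exact le_PB f (fun _ => -C) (hconst (-C))
      (fun x hx => by
        have := hC x hx; rw [Real.norm_eq_abs] at this
        show -C ≤ f x; linarith [abs_le.1 this]) z
  have hf' : ContinuousOn (fun x => -f x) B := hf.neg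
  have hlow' : ∀ z : ↑X, ((-C : ℝ) : EReal) ≤ PB J (fun x => -f x) z := by
    intro z
    exact le_PB (fun x => -f x) (fun _ => -C) (hconst (-C))
      (fun x hx => by
        have := hC x hx; rw [Real.norm_eq_abs] at this
        show -C ≤ -f x; linarith [abs_le.1 this]) z
  -- the envelope equals minus the envelope of -f
  have hPBeq : ∀ z : ↑X, PB J f z = -(PB J (fun x => -f x) z) := by
    intro z
    have := hsym f hf z
    rw [this, neg_neg]
  have hne_bot : ∀ z : ↑X, PB J f z ≠ ⊥ := fun z =>
    fun h => by simpa [h] using hlow z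
  have hne_top : ∀ z : ↑X, PB J f z ≠ ⊤ := by
    intro z h
    rw [hPBeq z, EReal.neg_eq_top_iff] at h
    simpa [h] using hlow' z
  -- define F
  set F : ↑X → ℝ := fun z => (PB J f z).toReal with hFdef
  have hF : ∀ z : ↑X, (F z : EReal) = PB J f z := fun z =>
    EReal.coe_toReal (hne_top z) (hne_bot z)
  have hPBneg : ∀ z : ↑X, PB J (fun x => -f x) z = ((-F z : ℝ) : EReal) := by
    intro z
    rw [hsym f hf z, ← hF z, EReal.coe_neg]
  -- lower semicontinuity of envelopes
  have lsc : ∀ g : ↑X → ℝ, LowerSemicontinuous (PB J g) := by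
    intro g
    have hrepr : PB J g = fun z =>
        ⨆ v : {v : ↑X → ℝ // IsSHR J v ∧ ∀ x ∈ B, v x ≤ g x}, ((v.1 z : ℝ) : EReal) := by
      funext z
      apply le_antisymm
      · refine sSup_le ?_
        rintro r ⟨v, hv, hvg, rfl⟩
        exact le_iSup_of_le ⟨v, hv, hvg⟩ le_rfl
      · exact iSup_le fun v => le_sSup ⟨v.1, v.2.1, v.2.2, rfl⟩
    rw [hrepr]
    exact lowerSemicontinuous_iSup fun v =>
      (continuous_coe_real_ereal.comp v.2.1.1).lowerSemicontinuous
  have lF : LowerSemicontinuous F := by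
    intro z y hy
    have h1 : (y : EReal) < PB J f z := by rw [← hF z]; exact_mod_cast hy
    filter_upwards [lsc f z (y : EReal) h1] with x hx
    rw [← hF x] at hx
    exact_mod_cast hx
  have lnF : LowerSemicontinuous (fun z => -F z) := by
    intro z y hy
    have h1 : (y : EReal) < PB J (fun x => -f x) z := by
      rw [hPBneg z]; exact_mod_cast hy
    filter_upwards [lsc (fun x => -f x) z (y : EReal) h1] with x hx
    rw [hPBneg x] at hx
    exact_mod_cast hx
  have uF : UpperSemicontinuous F := by
    intro z y hy
    filter_upwards [lnF z (-y) (by simpa using neg_lt_neg hy)] with x hx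
    simpa using neg_lt_neg hx
  have hFc : Continuous F := continuous_iff_lower_upperSemicontinuous.2 ⟨lF, uF⟩
  have hFfun : (fun x => (F x : EReal)) = PB J f := funext hF
  have hnFfun : (fun x => ((-F x : ℝ) : EReal)) = PB J (fun x => -f x) :=
    funext fun x => (hPBneg x).symm
  refine ⟨F, hF, ⟨hFc, ?_, fun z => EReal.coe_ne_top _, fun z μ hμ => ?_⟩,
    ⟨hFc.neg, ?_, fun z => EReal.coe_ne_top _, fun z μ hμ => ?_⟩, ?_⟩
  · exact (continuous_coe_real_ereal.comp hFc).upperSemicontinuous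
  · rw [hFfun]; exact PB_le_eint f z μ hμ
  · exact (continuous_coe_real_ereal.comp hFc.neg).upperSemicontinuous
  · show (fun x => ((-F x : ℝ) : EReal)) z ≤ eint μ (fun x => ((-F x : ℝ) : EReal))
    rw [hnFfun]; exact PB_le_eint (fun x => -f x) z μ hμ
  · -- EqOn F f B
    intro x hx
    have hle : ∀ (g : ↑X → ℝ), PB J g x ≤ (g x : EReal) := by
      intro g
      refine sSup_le ?_
      rintro r ⟨v, hv, hvg, rfl⟩
      exact_mod_cast hvg x hx
    have h1 : F x ≤ f x := by
      have := hle f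
      rw [← hF x] at this
      exact_mod_cast this
    have h2 : -F x ≤ -f x := by
      have := hle (fun y => -f y)
      rw [hPBneg x] at this
      exact_mod_cast this
    linarith
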